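/- Let ν > 0 and 0 ≤ b < a. With I_3(t) := F_ν(b,t) (F_ν(a,t) − F_ν(b,t)) / (1 − F_ν(b,t)), one has lim_{t→∞} t^{2ν} I_3(t) = (b^{2ν} / (2^ν Γ(ν+1))) · C_ν. -/

import Mathlib

open MeasureTheory Filter

/-- `F ν x t = (x^{2ν}/(2^ν Γ(ν))) ∫_t^∞ s^{-(ν+1)} exp(-x²/(2s)) ds`. -/
noncomputable def F (ν x t : ℝ) : ℝ :=
  (x ^ (2 * ν) / (2 ^ ν * Real.Gamma ν)) *
    ∫ s in Set.Ioi t, s ^ (-(ν + 1)) * Real.exp (-x ^ 2 / (2 * s))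

/-!
As `t → ∞` the Gaussian factor `exp(-x²/(2s))` tends to `1` uniformly on `s ≥ t`, so
`∫_t^∞ s^{-(ν+1)} exp(-x²/(2s)) ds ~ t^{-ν}/ν` and `t^ν F_ν(x,t) → x^{2ν}/(2^ν Γ(ν+1))`.
In particular `F_ν(b,t) → 0`, and the limit of `t^{2ν} I₃(t)` is the product of the limits of
`t^ν F_ν(b,t)` and `t^ν (F_ν(a,t) - F_ν(b,t))`.
-/

section

open Real Set

lemma exp_neg_sq_div_two_mul_le_one (x : ℝ) {s : ℝ} (hs : 0 ≤ s) :
    exp (-x ^ 2 / (2 * s)) ≤ 1 :=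
  exp_le_one_iff.2 (div_nonpos_of_nonpos_of_nonneg (neg_nonpos.2 (sq_nonneg x)) (by positivity))

lemma exp_neg_sq_div_two_mul_le_of_le (x : ℝ) {t s : ℝ} (ht : 0 < t) (hts : t ≤ s) :
    exp (-x ^ 2 / (2 * t)) ≤ exp (-x ^ 2 / (2 * s)) := by
  rw [exp_le_exp, neg_div, neg_div, neg_le_neg_iff]
  exact div_le_div_of_nonneg_left (sq_nonneg x) (by positivity) (by linarith)

variable {ν : ℝ} (x : ℝ) {t : ℝ}

lemma integrableOn_Ioi_rpow_mul_exp_neg_sq_div (hν : 0 < ν) (ht : 0 < t) :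
    IntegrableOn (fun s : ℝ => s ^ (-(ν + 1)) * exp (-x ^ 2 / (2 * s))) (Ioi t) := by
  refine (integrableOn_Ioi_rpow_of_lt (show -(ν + 1) < -1 by linarith) ht).mono' ?_ ?_
  · refine ContinuousOn.aestronglyMeasurable (fun s hs => ?_) measurableSet_Ioi
    have hs0 : s ≠ 0 := (ht.trans hs).ne'
    exact ContinuousAt.continuousWithinAt (by fun_prop (disch := simp [hs0]))
  · filter_upwards [ae_restrict_mem measurableSet_Ioi] with s hs
    have hs0 : 0 < s := ht.trans hs
    rw [norm_mul, norm_of_nonneg (rpow_nonneg hs0.le _), norm_of_nonneg (exp_pos _).le]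
    exact mul_le_of_le_one_right (rpow_nonneg hs0.le _) (exp_neg_sq_div_two_mul_le_one x hs0.le)

lemma integral_Ioi_rpow_neg_add_one (hν : 0 < ν) (ht : 0 < t) :
    ∫ s in Ioi t, s ^ (-(ν + 1)) = t ^ (-ν) / ν := by
  rw [integral_Ioi_rpow_of_lt (by linarith) ht]
  ring_nf

lemma integral_Ioi_rpow_mul_exp_neg_sq_div_mem_Icc (hν : 0 < ν) (ht : 0 < t) :
    ∫ s in Ioi t, s ^ (-(ν + 1)) * exp (-x ^ 2 / (2 * s)) ∈
      Icc (exp (-x ^ 2 / (2 * t)) * (t ^ (-ν) / ν)) (t ^ (-ν) / ν) := by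
  have hpow := integrableOn_Ioi_rpow_of_lt (show -(ν + 1) < -1 by linarith) ht
  have hint := integrableOn_Ioi_rpow_mul_exp_neg_sq_div x hν ht
  rw [← integral_Ioi_rpow_neg_add_one hν ht, ← integral_const_mul]
  constructor
  · refine setIntegral_mono_on (hpow.const_mul _) hint measurableSet_Ioi fun s hs => ?_
    rw [mul_comm (exp _)]
    exact mul_le_mul_of_nonneg_left (exp_neg_sq_div_two_mul_le_of_le x ht (le_of_lt hs))
      (rpow_nonneg (ht.trans hs).le _)
  · refine setIntegral_mono_on hint hpow measurableSet_Ioi fun s hs => ?_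
    exact mul_le_of_le_one_right (rpow_nonneg (ht.trans hs).le _)
      (exp_neg_sq_div_two_mul_le_one x (ht.trans hs).le)

lemma tendsto_rpow_mul_integral_Ioi_rpow_mul_exp_neg_sq_div (hν : 0 < ν) :
    Tendsto (fun t : ℝ => t ^ ν * ∫ s in Ioi t, s ^ (-(ν + 1)) * exp (-x ^ 2 / (2 * s)))
      atTop (nhds (1 / ν)) := by
  have hexp : Tendsto (fun t : ℝ => exp (-x ^ 2 / (2 * t)) / ν) atTop (nhds (1 / ν)) := by
    have h : Tendsto (fun t : ℝ => -x ^ 2 / (2 * t)) atTop (nhds 0) :=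
      tendsto_const_nhds.div_atTop (tendsto_id.const_mul_atTop two_pos)
    simpa using ((continuous_exp.tendsto 0).comp h).div_const ν
  have hcancel : ∀ t : ℝ, 0 < t → ∀ c : ℝ, t ^ ν * (c * (t ^ (-ν) / ν)) = c / ν := by
    intro t ht c
    rw [rpow_neg ht.le]
    field_simp [(rpow_pos_of_pos ht ν).ne']
  refine tendsto_of_tendsto_of_tendsto_of_le_of_le' hexp tendsto_const_nhds ?_ ?_ <;>
    filter_upwards [eventually_gt_atTop (0 : ℝ)] with t ht <;>
    have hbounds := integral_Ioi_rpow_mul_exp_neg_sq_div_mem_Icc x hν ht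
  · rw [← hcancel t ht]
    exact mul_le_mul_of_nonneg_left hbounds.1 (rpow_nonneg ht.le _)
  · rw [← one_mul (t ^ (-ν) / ν)] at hbounds
    rw [← hcancel t ht]
    exact mul_le_mul_of_nonneg_left hbounds.2 (rpow_nonneg ht.le _)

lemma tendsto_rpow_mul_F (hν : 0 < ν) :
    Tendsto (fun t : ℝ => t ^ ν * F ν x t) atTop
      (nhds (x ^ (2 * ν) / (2 ^ ν * Gamma (ν + 1)))) := by
  have hlim : x ^ (2 * ν) / (2 ^ ν * Gamma (ν + 1)) =
      x ^ (2 * ν) / (2 ^ ν * Gamma ν) * (1 / ν) := by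
    rw [Gamma_add_one hν.ne']
    field_simp
  rw [hlim]
  exact ((tendsto_rpow_mul_integral_Ioi_rpow_mul_exp_neg_sq_div x hν).const_mul _).congr
    fun t => by unfold F; ring

lemma tendsto_F_zero (hν : 0 < ν) : Tendsto (fun t : ℝ => F ν x t) atTop (nhds 0) := by
  have h := (tendsto_rpow_mul_F x hν).mul (tendsto_rpow_neg_atTop hν)
  rw [mul_zero] at h
  refine h.congr' ?_
  filter_upwards [eventually_gt_atTop (0 : ℝ)] with t ht
  rw [mul_right_comm, ← rpow_add ht, add_neg_cancel, rpow_zero, one_mul]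

end

theorem stmt_12_general (ν a b : ℝ) (hν : 0 < ν) :
    Tendsto (fun t : ℝ => t ^ (2 * ν) * (F ν b t * (F ν a t - F ν b t) / (1 - F ν b t)))
      atTop
      (nhds ((b ^ (2 * ν) / (2 ^ ν * Real.Gamma (ν + 1))) *
        ((a ^ (2 * ν) - b ^ (2 * ν)) / (2 ^ ν * Real.Gamma (ν + 1))))) := by
  have hFa := tendsto_rpow_mul_F a hν
  have hFb := tendsto_rpow_mul_F b hν
  have hden : Tendsto (fun t : ℝ => 1 - F ν b t) atTop (nhds 1) := by
    simpa using tendsto_const_nhds.sub (tendsto_F_zero b hν)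
  have h := (hFb.mul (hFa.sub hFb)).div hden one_ne_zero
  rw [div_one, ← sub_div] at h
  refine h.congr' ?_
  filter_upwards [eventually_gt_atTop (0 : ℝ)] with t ht
  rw [Pi.div_apply, two_mul, Real.rpow_add ht]
  ring

theorem stmt_12 (ν a b : ℝ) (hν : 0 < ν) (hb : 0 ≤ b) (hba : b < a) :
    Tendsto (fun t : ℝ => t ^ (2 * ν) * (F ν b t * (F ν a t - F ν b t) / (1 - F ν b t)))
      atTop
      (nhds ((b ^ (2 * ν) / (2 ^ ν * Real.Gamma (ν + 1))) *
        ((a ^ (2 * ν) - b ^ (2 * ν)) / (2 ^ ν * Real.Gamma (ν + 1))))) :=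
  stmt_12_general ν a b hν
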